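/- Let γ_X < 0 and α ≥ 1. Define l_β = |γ_X|^{-1}|γ|^{-β} Beta(|γ_X|^{-1}, β+1) for β ≥ 1, where γ < 0 is fixed. Then with V_α := 1 − ((α+2)/(α+1)) · l_{α+1}² / (l_α · l_{α+2}), one has (V_α^{-1} + α + 1)^{-1} = γ_X. -/

import Mathlib

open Real

/-- Beta function via Gamma: Beta(a,b) = Γ(a)Γ(b)/Γ(a+b). -/
noncomputable def BetaFun (a b : ℝ) : ℝ := Gamma a * Gamma b / Gamma (a + b)

/-- The normalized limiting moments. -/
noncomputable def lMom (γX γ β : ℝ) : ℝ := |γX|⁻¹ * |γ| ^ (-β) * BetaFun |γX|⁻¹ (β + 1)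

/-!
Each step β ↦ β + 1 multiplies `l_β` by `(β + 1) / (|γ| (|γ_X|⁻¹ + β + 1))`, by `Γ(u + 1) = u Γ(u)`
applied twice in `Beta(a, b + 1) = b / (a + b) · Beta(a, b)`. Hence the ratio
`l_{α+1}² / (l_α l_{α+2})` is `(α + 1)(|γ_X|⁻¹ + α + 2) / ((α + 2)(|γ_X|⁻¹ + α + 1))`, so that
`V_α = -(|γ_X|⁻¹ + α + 1)⁻¹` and `V_α⁻¹ + α + 1 = -|γ_X|⁻¹ = γ_X⁻¹`.
-/

theorem BetaFun_pos {a b : ℝ} (ha : 0 < a) (hb : 0 < b) : 0 < BetaFun a b := by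
  unfold BetaFun
  have := Gamma_pos_of_pos ha
  have := Gamma_pos_of_pos hb
  have := Gamma_pos_of_pos (add_pos ha hb)
  positivity

theorem BetaFun_add_one_right {a b : ℝ} (hb : b ≠ 0) (hab : a + b ≠ 0) :
    BetaFun a (b + 1) = b / (a + b) * BetaFun a b := by
  unfold BetaFun
  rw [← add_assoc, Gamma_add_one hb, Gamma_add_one hab, div_mul_div_comm]
  congr 1
  ring

theorem lMom_pos {γX γ β : ℝ} (hX : γX ≠ 0) (hγ : γ ≠ 0) (hβ : -1 < β) : 0 < lMom γX γ β := by
  have hc : 0 < |γX|⁻¹ := inv_pos.2 (abs_pos.2 hX)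
  have := rpow_pos_of_pos (abs_pos.2 hγ) (-β)
  have := BetaFun_pos hc (show 0 < β + 1 by linarith)
  unfold lMom
  positivity

theorem lMom_add_one {γX γ β : ℝ} (hγ : γ ≠ 0) (hβ : β + 1 ≠ 0) (hcβ : |γX|⁻¹ + (β + 1) ≠ 0) :
    lMom γX γ (β + 1) = (β + 1) / (|γ| * (|γX|⁻¹ + (β + 1))) * lMom γX γ β := by
  have hγ0 := abs_pos.2 hγ
  unfold lMom
  rw [BetaFun_add_one_right hβ hcβ, neg_add, rpow_add hγ0, rpow_neg_one]
  field_simp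

theorem stmt_6 (γX γ α : ℝ) (hX : γX < 0) (hγ : γ < 0) (hα : 1 ≤ α) :
    ((1 - ((α + 2) / (α + 1)) *
        (lMom γX γ (α + 1)) ^ 2 / (lMom γX γ α * lMom γX γ (α + 2)))⁻¹ + α + 1)⁻¹
      = γX := by
  set c := |γX|⁻¹ with hc
  have hc0 : 0 < c := inv_pos.2 (abs_pos.2 hX.ne)
  have hl₀ := lMom_pos hX.ne hγ.ne (show -1 < α by linarith)
  have hl₁ : lMom γX γ (α + 1) = (α + 1) / (|γ| * (c + (α + 1))) * lMom γX γ α :=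
    lMom_add_one hγ.ne (by linarith) (by linarith)
  have hl₂ : lMom γX γ (α + 2) = (α + 2) / (|γ| * (c + (α + 2))) * lMom γX γ (α + 1) := by
    have := lMom_add_one (γX := γX) (β := α + 1) hγ.ne (by linarith) (by linarith)
    rwa [show α + 1 + 1 = α + 2 by ring] at this
  have hV : 1 - ((α + 2) / (α + 1)) * (lMom γX γ (α + 1)) ^ 2 / (lMom γX γ α * lMom γX γ (α + 2))
      = -(c + (α + 1))⁻¹ := by
    have : |γ| ≠ 0 := abs_ne_zero.2 hγ.ne
    have : α + 1 ≠ 0 := by linarith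
    have : α + 2 ≠ 0 := by linarith
    have : c + (α + 1) ≠ 0 := by linarith
    have : c + (α + 2) ≠ 0 := by linarith
    rw [hl₂, hl₁]
    field_simp
    ring
  rw [hV, inv_neg, inv_inv, show -(c + (α + 1)) + α + 1 = -c by ring, hc, inv_neg, inv_inv,
    abs_of_neg hX, neg_neg]
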